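/- In the group G_n, for odd l > 1, conjugation by g_l^k sends g₁^{k₁} ⋯ g_{2n+1}^{k_{2n+1}} to g₁^{k₁ + k·k'_{l-1}·(-1)^{k₂+k₄+⋯+k_{l-3}}} g₂^{k₂} ⋯ g_{2n+1}^{k_{2n+1}}, where k'_{l-1} = k_{l-1} mod 2. -/

import Mathlib

/-- The defining relators of the group `Gₙ`: generators are indexed by `{1, …, 2n+1}`;
for even `j`, `g_j g₁ g_j⁻¹ = g₁⁻¹` and `g_{j+1} g_j g_{j+1}⁻¹ = g₁ g_j`;
all other pairs of generators commute. -/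
def relsG (n : ℕ) : Set (FreeGroup {i : ℕ // 1 ≤ i ∧ i ≤ 2*n+1}) :=
  { w | (∃ j : {i : ℕ // 1 ≤ i ∧ i ≤ 2*n+1}, j.1 % 2 = 0 ∧
          w = FreeGroup.of j * FreeGroup.of ⟨1, by omega⟩ * (FreeGroup.of j)⁻¹ *
              FreeGroup.of ⟨1, by omega⟩) ∨
        (∃ j j1 : {i : ℕ // 1 ≤ i ∧ i ≤ 2*n+1}, j.1 % 2 = 0 ∧ j1.1 = j.1 + 1 ∧
          w = FreeGroup.of j1 * FreeGroup.of j * (FreeGroup.of j1)⁻¹ *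
              (FreeGroup.of ⟨1, by omega⟩ * FreeGroup.of j)⁻¹) ∨
        (∃ a b : {i : ℕ // 1 ≤ i ∧ i ≤ 2*n+1},
          ¬ ((a.1 = 1 ∧ b.1 % 2 = 0) ∨ (b.1 = 1 ∧ a.1 % 2 = 0) ∨
             (b.1 % 2 = 0 ∧ a.1 = b.1 + 1) ∨ (a.1 % 2 = 0 ∧ b.1 = a.1 + 1)) ∧
          w = FreeGroup.of a * FreeGroup.of b * (FreeGroup.of a)⁻¹ * (FreeGroup.of b)⁻¹) }

/-- The polycyclic group `Gₙ` of Hirsch length `2n+1`. -/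
abbrev Gn (n : ℕ) := PresentedGroup (relsG n)

/-- The generator `g_i` of `Gₙ` (1-based index, `1 ≤ i ≤ 2n+1`). -/
def gg (n : ℕ) (i : ℕ) : Gn n :=
  if h : 1 ≤ i ∧ i ≤ 2*n+1 then PresentedGroup.of ⟨i, h⟩ else 1

/-- `(-1)^m` for an integer `m`: `1` if `m` is even, `-1` if `m` is odd. -/
def eps (m : ℤ) : ℤ := if m % 2 = 0 then 1 else -1

/-!
Write `l = 2m + 3`, `a = g₁`, `b = g_{l-1}` and `g = g_l`. Conjugation by `g^k` fixes `a` and every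
`g_j` with `j ≠ l - 1`, and sends `b` to `a^k b`; since `b a b⁻¹ = a⁻¹`, it sends `b^{k_{l-1}}` to
`(a^k b)^{k_{l-1}} = a^{k k'_{l-1}} b^{k_{l-1}}`. Moving this power of `a` to the front, past
`g₂^{k₂} ⋯ g_{l-2}^{k_{l-2}}`, inverts it once for each even `j` with `k_j` odd, which yields the
sign `(-1)^{k₂ + k₄ + ⋯ + k_{l-3}}`.
-/

lemma eps_add (x y : ℤ) : eps (x + y) = eps x * eps y := by
  simp only [eps]; split_ifs <;> omega

lemma eps_add_one (m : ℤ) : eps (m + 1) = -eps m := by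
  simp only [eps]; split_ifs <;> omega

lemma eps_sub_one (m : ℤ) : eps (m - 1) = -eps m := by
  simp only [eps]; split_ifs <;> omega

lemma emod_two_add_one (m : ℤ) : (m + 1) % 2 = m % 2 + eps m := by
  simp only [eps]; split_ifs <;> omega

lemma emod_two_sub_one (m : ℤ) : (m - 1) % 2 = m % 2 + eps m := by
  simp only [eps]; split_ifs <;> omega

section SemiconjBy

variable {G : Type*} [Group G] {g x a b : G}

lemma semiconjBy_of_mul_mul_inv_mul_eq_one {y : G} (h : g * x * g⁻¹ * y = 1) :
    SemiconjBy g x y⁻¹ := by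
  rw [← eq_inv_of_mul_eq_one_left h]
  exact SemiconjBy.conj_mk g x

lemma SemiconjBy.zpow_left_of_inv (h : SemiconjBy g x x⁻¹) (m : ℤ) :
    SemiconjBy (g ^ m) x (x ^ eps m) := by
  induction m using Int.induction_on with
  | zero => simp [eps]
  | succ k ih =>
    rw [zpow_add_one, eps_add_one, zpow_neg x]
    exact ih.inv_right.mul_left h
  | pred k ih =>
    have h' : SemiconjBy g⁻¹ x x⁻¹ := by simpa using h.inv_symm_left.inv_right
    rw [zpow_sub_one, eps_sub_one, zpow_neg x]
    exact ih.inv_right.mul_left h'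

lemma SemiconjBy.zpow_zpow_of_inv (h : SemiconjBy g x x⁻¹) (m e : ℤ) :
    SemiconjBy (g ^ m) (x ^ e) (x ^ (eps m * e)) := by
  simpa only [zpow_mul] using (h.zpow_left_of_inv m).zpow_right e

lemma mul_zpow_of_semiconjBy_inv (h : SemiconjBy b x x⁻¹) (m : ℤ) :
    (x * b) ^ m = x ^ (m % 2) * b ^ m := by
  induction m using Int.induction_on with
  | zero => simp
  | succ k ih =>
    calc (x * b) ^ ((k : ℤ) + 1) = x ^ ((k : ℤ) % 2) * (b ^ (k : ℤ) * x) * b := by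
          rw [zpow_add_one, ih]; group
      _ = x ^ ((k : ℤ) % 2) * (x ^ eps k * b ^ (k : ℤ)) * b := by
          rw [(h.zpow_left_of_inv k).eq]
      _ = x ^ (((k : ℤ) + 1) % 2) * b ^ ((k : ℤ) + 1) := by
          rw [emod_two_add_one, zpow_add, zpow_add_one]; group
  | pred k ih =>
    calc (x * b) ^ (-(k : ℤ) - 1) = x ^ (-(k : ℤ) % 2) * (b ^ (-(k : ℤ) - 1) * x⁻¹) := by
          rw [zpow_sub_one, ih, zpow_sub_one]; group
      _ = x ^ (-(k : ℤ) % 2) * ((x ^ eps (-(k : ℤ) - 1))⁻¹ * b ^ (-(k : ℤ) - 1)) := by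
          rw [(h.zpow_left_of_inv _).inv_right.eq]
      _ = x ^ ((-(k : ℤ) - 1) % 2) * b ^ (-(k : ℤ) - 1) := by
          rw [emod_two_sub_one, eps_sub_one, zpow_add, zpow_neg, inv_inv]; group

lemma SemiconjBy.zpow_left_of_commute (hc : Commute g a) (h : SemiconjBy g b (a * b)) (q : ℤ) :
    SemiconjBy (g ^ q) b (a ^ q * b) := by
  induction q using Int.induction_on with
  | zero => simp
  | succ k ih =>
    have h' := (SemiconjBy.mul_right (hc.zpow_left k) ih).mul_left h
    rwa [← mul_assoc, ← zpow_one_add, add_comm, ← zpow_add_one] at h'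
  | pred k ih =>
    have hinv : SemiconjBy g⁻¹ b (a⁻¹ * b) := by
      simpa using SemiconjBy.mul_right hc.inv_inv h.inv_symm_left
    have h' := (SemiconjBy.mul_right (hc.zpow_left _).inv_right ih).mul_left hinv
    rwa [← zpow_sub_one, ← mul_assoc, ← zpow_neg_one a, ← zpow_add, neg_add_eq_sub] at h'

lemma SemiconjBy.zpow_zpow_of_commute (hc : Commute g a) (h : SemiconjBy g b (a * b))
    (hba : SemiconjBy b a a⁻¹) (q m : ℤ) :
    SemiconjBy (g ^ q) (b ^ m) (a ^ (q * (m % 2)) * b ^ m) := by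
  have hbq : SemiconjBy b (a ^ q) (a ^ q)⁻¹ := by simpa using hba.zpow_right q
  simpa only [mul_zpow_of_semiconjBy_inv hbq, zpow_mul] using
    (h.zpow_left_of_commute hc q).zpow_right m

end SemiconjBy

lemma gg_of {n i : ℕ} (h : 1 ≤ i ∧ i ≤ 2*n+1) : gg n i = PresentedGroup.of ⟨i, h⟩ :=
  dif_pos h

lemma semiconjBy_gg_gg_one {n j : ℕ} (hj : j % 2 = 0) (hj0 : 0 < j) (hjn : j ≤ 2*n) :
    SemiconjBy (gg n j) (gg n 1) (gg n 1)⁻¹ := by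
  have h := PresentedGroup.one_of_mem (rels := relsG n)
    (Or.inl ⟨⟨j, by omega, by omega⟩, hj, rfl⟩)
  simp only [map_mul, map_inv] at h
  rw [gg_of (by omega), gg_of (by omega)]
  exact semiconjBy_of_mul_mul_inv_mul_eq_one h

lemma semiconjBy_gg_succ {n j : ℕ} (hj : j % 2 = 0) (hj0 : 0 < j) (hjn : j ≤ 2*n) :
    SemiconjBy (gg n (j+1)) (gg n j) (gg n 1 * gg n j) := by
  have h := PresentedGroup.one_of_mem (rels := relsG n)
    (Or.inr (Or.inl ⟨⟨j, by omega, by omega⟩, ⟨j+1, by omega, by omega⟩, hj, rfl, rfl⟩))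
  simp only [map_mul, map_inv] at h
  rw [gg_of (by omega), gg_of (by omega), gg_of (by omega), ← inv_inv (_ * PresentedGroup.of _)]
  exact semiconjBy_of_mul_mul_inv_mul_eq_one h

lemma commute_gg {n a b : ℕ} (h : ¬((a = 1 ∧ b % 2 = 0) ∨ (b = 1 ∧ a % 2 = 0) ∨
    (b % 2 = 0 ∧ a = b + 1) ∨ (a % 2 = 0 ∧ b = a + 1))) : Commute (gg n a) (gg n b) := by
  by_cases ha : 1 ≤ a ∧ a ≤ 2*n+1; swap
  · simp [gg, ha]
  by_cases hb : 1 ≤ b ∧ b ≤ 2*n+1; swap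
  · simp [gg, hb]
  have hw := PresentedGroup.one_of_mem (rels := relsG n)
    (Or.inr (Or.inr ⟨⟨a, ha⟩, ⟨b, hb⟩, h, rfl⟩))
  simp only [map_mul, map_inv] at hw
  rw [gg_of ha, gg_of hb, Commute, ← inv_inv (PresentedGroup.of _)]
  exact semiconjBy_of_mul_mul_inv_mul_eq_one hw

lemma semiconjBy_prod_gg_gg_one_zpow {n m : ℕ} (hm : m ≤ n) (ks : ℕ → ℤ) (e : ℤ) :
    SemiconjBy ((List.range (2*m)).map (fun i => gg n (i+2) ^ ks (i+2))).prod (gg n 1 ^ e)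
      (gg n 1 ^ (e * eps (∑ i ∈ Finset.range m, ks (2*i+2)))) := by
  induction m generalizing e with
  | zero => simp [eps]
  | succ m ih =>
    have heven : SemiconjBy (gg n (2*m+2) ^ ks (2*m+2)) (gg n 1 ^ e)
        (gg n 1 ^ (eps (ks (2*m+2)) * e)) :=
      (semiconjBy_gg_gg_one (by omega) (by omega) (by omega)).zpow_zpow_of_inv _ _
    have hodd : Commute (gg n (2*m+1+2) ^ ks (2*m+1+2)) (gg n 1 ^ e) :=
      (commute_gg (by omega)).zpow_zpow _ _
    have h := ((ih (by omega) _).mul_left heven).mul_left hodd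
    rw [show 2 * (m+1) = 2*m + 1 + 1 by ring, List.range_succ, List.range_succ]
    simp only [List.map_append, List.prod_append, List.map_singleton, List.prod_singleton]
    rwa [Finset.sum_range_succ, eps_add, mul_comm (eps _), ← mul_assoc, mul_comm e]

lemma semiconjBy_gg_zpow_prod_gg {n m : ℕ} (hm : 2*m+3 ≤ 2*n+1) (kk : ℤ) (ks : ℕ → ℤ) :
    SemiconjBy (gg n (2*m+3) ^ kk) ((List.range (2*n)).map (fun i => gg n (i+2) ^ ks (i+2))).prod
      (gg n 1 ^ (kk * (ks (2*m+2) % 2) * eps (∑ i ∈ Finset.range m, ks (2*i+2))) *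
        ((List.range (2*n)).map (fun i => gg n (i+2) ^ ks (i+2))).prod) := by
  set f : ℕ → Gn n := fun i => gg n (i+2) ^ ks (i+2)
  have hfixed : ∀ s : List ℕ, (∀ i ∈ s, i ≠ 2*m) → Commute (gg n (2*m+3) ^ kk) (s.map f).prod :=
    fun s hs => Commute.list_prod_right _ _ fun y hy => by
      obtain ⟨i, hi, rfl⟩ := List.mem_map.mp hy
      exact (commute_gg (by have := hs i hi; omega)).zpow_zpow _ _
  have hmid : SemiconjBy (gg n (2*m+3) ^ kk) (f (2*m))
      (gg n 1 ^ (kk * (ks (2*m+2) % 2)) * f (2*m)) :=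
    SemiconjBy.zpow_zpow_of_commute (commute_gg (by omega))
      (semiconjBy_gg_succ (by omega) (by omega) (by omega))
      (semiconjBy_gg_gg_one (by omega) (by omega) (by omega)) kk _
  have hmove :=
    semiconjBy_prod_gg_gg_one_zpow (n := n) (m := m) (by omega) ks (kk * (ks (2*m+2) % 2))
  obtain ⟨r, hr⟩ : ∃ r, 2*n = 2*m+1+r := ⟨2*n - (2*m+1), by omega⟩
  rw [show List.range (2*n) = List.range (2*m+1+r) by rw [hr], List.range_add, List.range_succ]
  simp only [List.map_append, List.prod_append, List.map_singleton, List.prod_singleton]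
  have h := SemiconjBy.mul_right (SemiconjBy.mul_right
    (hfixed (List.range (2*m)) (by simp; omega)) hmid)
    (hfixed ((List.range r).map (2*m+1 + ·)) (by simp; omega))
  rw [← mul_assoc _ (gg n 1 ^ _), hmove.eq] at h
  simpa only [mul_assoc] using h

theorem stmt12 (n : ℕ) (l : ℕ) (hlo : l % 2 = 1) (hl1 : 3 ≤ l) (hl2 : l ≤ 2*n+1)
    (kk : ℤ) (ks : ℕ → ℤ) :
    gg n l ^ kk * ((List.range (2*n+1)).map (fun i => gg n (i+1) ^ ks (i+1))).prod *
      (gg n l ^ kk)⁻¹ =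
    gg n 1 ^ (ks 1 + kk * (ks (l-1) % 2) * eps (∑ i ∈ Finset.range ((l-3)/2), ks (2*i+2))) *
      ((List.range (2*n)).map (fun i => gg n (i+2) ^ ks (i+2))).prod := by
  obtain ⟨m, rfl⟩ : ∃ m, l = 2*m+3 := ⟨(l-3)/2, by omega⟩
  rw [show 2*m+3-1 = 2*m+2 by omega, show (2*m+3-3)/2 = m by omega, List.range_succ_eq_map,
    List.map_cons, List.prod_cons, List.map_map]
  have hfirst : Commute (gg n (2*m+3) ^ kk) (gg n (0+1) ^ ks (0+1)) :=
    (commute_gg (by omega)).zpow_zpow _ _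
  rw [mul_inv_eq_iff_eq_mul, zpow_add, mul_assoc (gg n 1 ^ ks 1)]
  exact SemiconjBy.mul_right hfirst (semiconjBy_gg_zpow_prod_gg hl2 kk ks)
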